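/- Fix an integer k ≥ 2 and nonzero real numbers w₁, …, w_k. Then: (i) there is a constant C > 0 such that for every n and every set E of n points in ℝ², the number of (k+1)-tuples (x₀, x₁, …, x_k) of pairwise distinct points of E with x₀ · x_i = w_i for all i = 1, …, k is at most C · n^k; and (ii) there exist a constant c > 0 and N such that for every n > N there is a set E of n points in ℝ² containing at least c · n^k such tuples. In other words, for the k-star G with edge weights w₁, …, w_k, g(G; n) ≈ n^k. -/

import Mathlib

open scoped InnerProductSpace

noncomputable section

/-- Points in the plane. -/
abbrev Pt2 : Type := EuclideanSpace ℝ (Fin 2)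

/-- The set of dot product `k`-star configurations with weights `w` in a point set `E`:
`(k+1)`-tuples `(x 0, x 1, …, x k)` of pairwise distinct points of `E` such that the dot
product of the center `x 0` with the `i`-th leaf `x (i+1)` equals `w i`. -/
def dpStarConfigs (k : ℕ) (w : Fin k → ℝ) (E : Finset Pt2) : Set (Fin (k + 1) → Pt2) :=
  {x | (∀ i, x i ∈ E) ∧ Function.Injective x ∧ ∀ i : Fin k, ⟪x 0, x i.succ⟫_ℝ = w i}

/-!
For the upper bound, look at the first two leaves `p = x₁` and `q = x₂` of a configuration. If
they are linearly independent, the equations `x₀ · p = w₁` and `x₀ · q = w₂` determine the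
center, so the configuration is determined by its `k` leaves. Otherwise `x₀ · p = w₁ ≠ 0`
forces `p ≠ 0` and then `q = (w₂ / w₁) p`, so the configuration is determined by its center
and its leaves other than `q`. Each kind therefore contributes at most `n ^ k` configurations.

For the lower bound, take the center `(1, 0)`: every point of the vertical line `X = w_i` is
an admissible `i`-th leaf. Putting `m ≈ n / k` points on each of these lines, at pairwise
distinct positive heights, gives `m ^ k` configurations.
-/

open Module Finset Function

section InnerProductSpace

variable {V : Type*} [NormedAddCommGroup V] [InnerProductSpace ℝ V]

theorem eq_of_inner_eq_of_linearIndependent (hV : finrank ℝ V = 2) {p q z z' : V}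
    (hpq : LinearIndependent ℝ ![q, p]) (hp : ⟪z, p⟫_ℝ = ⟪z', p⟫_ℝ) (hq : ⟪z, q⟫_ℝ = ⟪z', q⟫_ℝ) :
    z = z' := by
  refine InnerProductSpace.ext_inner_right_basis
    (basisOfLinearIndependentOfCardEqFinrank hpq (by simp [hV])) fun i => ?_
  fin_cases i <;> simpa

theorem eq_div_smul_of_not_linearIndependent {p q z : V} {a b : ℝ}
    (hpq : ¬LinearIndependent ℝ ![q, p]) (hp : ⟪z, p⟫_ℝ = a) (ha : a ≠ 0) (hq : ⟪z, q⟫_ℝ = b) :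
    q = (b / a) • p := by
  have hp0 : p ≠ 0 := by rintro rfl; simp [← hp] at ha
  obtain ⟨t, rfl⟩ : ∃ t : ℝ, t • p = q := by simpa [linearIndependent_fin2, hp0] using hpq
  rw [inner_smul_right, hp] at hq
  rw [← hq, mul_div_cancel_right₀ _ ha]

end InnerProductSpace

theorem Set.ncard_le_card_pow_of_injOn {α β : Type*} {n : ℕ} {s : Set α} {T : Finset β}
    (f : α → Fin n → β) (hf : ∀ x ∈ s, ∀ i, f x i ∈ T) (hinj : s.InjOn f) :
    s.ncard ≤ #T ^ n := by
  rw [← Fintype.card_piFinset_const, ← Set.ncard_coe_finset]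
  exact Set.ncard_le_ncard_of_injOn f (fun x hx => Fintype.mem_piFinset.2 (hf x hx)) hinj
    (Finset.finite_toSet _)

section Configurations

variable {k : ℕ} {w : Fin k → ℝ}

theorem dpStarConfigs_mono {E F : Finset Pt2} (h : E ⊆ F) :
    dpStarConfigs k w E ⊆ dpStarConfigs k w F :=
  fun _ ⟨hE, hinj, hw⟩ => ⟨fun i => h (hE i), hinj, hw⟩

theorem dpStarConfigs_finite (E : Finset Pt2) : (dpStarConfigs k w E).Finite :=
  (Fintype.piFinset fun _ => E).finite_toSet.subset fun _ hx => Fintype.mem_piFinset.2 hx.1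

theorem eq_of_center_eq_of_leaves_eq {x y : Fin (k + 1) → Pt2} (h0 : x 0 = y 0)
    (hleaf : ∀ i : Fin k, x i.succ = y i.succ) : x = y :=
  funext fun j => Fin.cases h0 hleaf j

theorem ncard_dpStarConfigs_inter_linearIndependent_le (E : Finset Pt2) (a b : Fin k) :
    (dpStarConfigs k w E ∩ {x | LinearIndependent ℝ ![x b.succ, x a.succ]}).ncard ≤ #E ^ k := by
  refine Set.ncard_le_card_pow_of_injOn (fun x i => x i.succ) (fun x hx i => hx.1.1 i.succ) ?_
  rintro x ⟨⟨_, _, hxw⟩, hxli⟩ y ⟨⟨_, _, hyw⟩, -⟩ hxy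
  have hleaf (i : Fin k) : x i.succ = y i.succ := congrFun hxy i
  refine eq_of_center_eq_of_leaves_eq ?_ hleaf
  refine eq_of_inner_eq_of_linearIndependent finrank_euclideanSpace_fin hxli ?_ ?_ <;>
    rw [hxw, hleaf, hyw]

theorem ncard_dpStarConfigs_diff_linearIndependent_le (E : Finset Pt2) {a b : Fin k}
    (hab : a ≠ b) (ha : w a ≠ 0) :
    (dpStarConfigs k w E \ {x | LinearIndependent ℝ ![x b.succ, x a.succ]}).ncard ≤ #E ^ k := by
  classical
  -- the leaf `x b.succ` is a multiple of `x a.succ`, so the center can take its slot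
  refine Set.ncard_le_card_pow_of_injOn (fun x => update (fun i => x i.succ) b (x 0))
    (fun x hx i => ?_) ?_
  · rcases eq_or_ne i b with rfl | hi
    · simpa using hx.1.1 0
    · simpa [hi] using hx.1.1 i.succ
  · rintro x ⟨⟨_, _, hxw⟩, hxli⟩ y ⟨⟨_, _, hyw⟩, hyli⟩ hxy
    have h0 : x 0 = y 0 := by simpa using congrFun hxy b
    have hleaf (i : Fin k) (hi : i ≠ b) : x i.succ = y i.succ := by
      simpa [hi] using congrFun hxy i
    refine eq_of_center_eq_of_leaves_eq h0 fun i => ?_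
    rcases eq_or_ne i b with rfl | hi
    · rw [eq_div_smul_of_not_linearIndependent hxli (hxw a) ha (hxw i),
        eq_div_smul_of_not_linearIndependent hyli (hyw a) ha (hyw i), hleaf a hab]
    · exact hleaf i hi

theorem ncard_dpStarConfigs_le (hk : 2 ≤ k) (hw : ∀ i, w i ≠ 0) (E : Finset Pt2) :
    (dpStarConfigs k w E).ncard ≤ 2 * #E ^ k := by
  let a : Fin k := ⟨0, by omega⟩
  let b : Fin k := ⟨1, by omega⟩
  have hab : a ≠ b := by simp [a, b, Fin.ext_iff]
  rw [← Set.ncard_inter_add_ncard_sdiff_eq_ncard _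
    {x | LinearIndependent ℝ ![x b.succ, x a.succ]} (dpStarConfigs_finite E)]
  have h₁ := ncard_dpStarConfigs_inter_linearIndependent_le (w := w) E a b
  have h₂ := ncard_dpStarConfigs_diff_linearIndependent_le E hab (hw a)
  omega

theorem le_ncard_dpStarConfigs_insert_image {m : ℕ} (c : Pt2) (ℓ : Fin k × Fin m → Pt2)
    (hℓ : Injective ℓ) (hc : ∀ p, ℓ p ≠ c) (hw : ∀ p, ⟪c, ℓ p⟫_ℝ = w p.1) :
    m ^ k ≤ (dpStarConfigs k w (insert c (univ.image ℓ))).ncard := by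
  classical
  let Φ : (Fin k → Fin m) → Fin (k + 1) → Pt2 := fun j => Fin.cons c fun i => ℓ (i, j i)
  have hΦ : Injective Φ := fun j j' h => funext fun i =>
    (Prod.ext_iff.1 (hℓ (by simpa [Φ] using congrFun h i.succ))).2
  have hrange : Set.range Φ ⊆ dpStarConfigs k w (insert c (univ.image ℓ)) := by
    rintro _ ⟨j, rfl⟩
    refine ⟨Fin.cases (by simp [Φ]) fun i => by simp [Φ], ?_, fun i => by simpa [Φ] using hw _⟩
    refine Fin.cons_injective_iff.2 ⟨?_, fun i i' h => (Prod.ext_iff.1 (hℓ h)).1⟩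
    rintro ⟨i, hi⟩
    exact hc _ hi
  calc m ^ k = (Set.range Φ).ncard := by
        rw [← Set.image_univ, Set.ncard_image_of_injective _ hΦ, Set.ncard_univ, Nat.card_fun]
        simp
    _ ≤ _ := Set.ncard_le_ncard hrange (dpStarConfigs_finite _)

theorem exists_card_le_le_ncard_dpStarConfigs (w : Fin k → ℝ) (m : ℕ) :
    ∃ F : Finset Pt2, #F ≤ k * m + 1 ∧ m ^ k ≤ (dpStarConfigs k w F).ncard := by
  classical
  let ℓ : Fin k × Fin m → Pt2 := fun p => !₂[w p.1, (finProdFinEquiv p : ℕ) + 1]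
  refine ⟨insert !₂[1, 0] (univ.image ℓ), ?_, le_ncard_dpStarConfigs_insert_image _ ℓ ?_ ?_ ?_⟩
  · calc #(insert !₂[1, 0] (univ.image ℓ)) ≤ #(univ.image ℓ) + 1 := card_insert_le _ _
      _ ≤ k * m + 1 := by simpa using card_image_le (s := univ) (f := ℓ)
  · intro p q h
    have := congrArg (· 1) h
    simp only [ℓ, Matrix.cons_val_one, Matrix.cons_val_fin_one, add_left_inj, Nat.cast_inj] at this
    exact finProdFinEquiv.injective (Fin.ext this)
  · intro p h
    have := congrArg (· 1) h
    simp only [ℓ, Matrix.cons_val_one, Matrix.cons_val_fin_one] at this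
    exact Nat.cast_add_one_ne_zero _ this
  · intro p
    simp [ℓ, EuclideanSpace.inner_eq_star_dotProduct]

theorem exists_card_eq_le_ncard_dpStarConfigs (hk : 0 < k) (w : Fin k → ℝ) {n : ℕ}
    (hn : k < n) :
    ∃ E : Finset Pt2, #E = n ∧ ((n : ℝ) / (2 * k)) ^ k ≤ (dpStarConfigs k w E).ncard := by
  obtain ⟨m, hkm, hnm⟩ : ∃ m, k * m + 1 ≤ n ∧ n ≤ 2 * (k * m) := by
    refine ⟨(n - 1) / k, ?_, ?_⟩
    · have := Nat.mul_div_le (n - 1) k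
      omega
    · have h₁ := Nat.lt_mul_div_succ (n - 1) hk
      have h₂ : k ≤ k * ((n - 1) / k) := Nat.le_mul_of_pos_right k (Nat.div_pos (by omega) hk)
      rw [Nat.mul_succ] at h₁
      omega
  obtain ⟨F, hF, hcount⟩ := exists_card_le_le_ncard_dpStarConfigs w m
  obtain ⟨E, hFE, hE⟩ := Infinite.exists_superset_card_eq F n (hF.trans hkm)
  refine ⟨E, hE, ?_⟩
  have hm : (n : ℝ) / (2 * k) ≤ m := by
    rw [div_le_iff₀ (by positivity)]
    exact_mod_cast (by linarith : n ≤ m * (2 * k))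
  calc ((n : ℝ) / (2 * k)) ^ k ≤ (m : ℝ) ^ k := pow_le_pow_left₀ (by positivity) hm k
    _ ≤ (dpStarConfigs k w F).ncard := by exact_mod_cast hcount
    _ ≤ (dpStarConfigs k w E).ncard := by
      exact_mod_cast Set.ncard_le_ncard (dpStarConfigs_mono hFE) (dpStarConfigs_finite E)

end Configurations

/-- **dot product `k`-stars in the plane.** Fix `k ≥ 2` and nonzero weights
`w₁, …, w_k`.  (i) There is `C > 0` such that every set of `n` points in the plane has at
most `C · n^k` dot product `k`-star configurations; (ii) there are `c > 0` and `N` such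
that for every `n > N` some set of `n` points in the plane has at least `c · n^k`. -/
theorem dotProduct_kStar_bounds (k : ℕ) (hk : 2 ≤ k) (w : Fin k → ℝ) (hw : ∀ i, w i ≠ 0) :
    (∃ C : ℝ, 0 < C ∧ ∀ (n : ℕ) (E : Finset Pt2), E.card = n →
      ((dpStarConfigs k w E).ncard : ℝ) ≤ C * (n : ℝ) ^ k) ∧
    (∃ c : ℝ, 0 < c ∧ ∃ N : ℕ, ∀ n : ℕ, N < n →
      ∃ E : Finset Pt2, E.card = n ∧
        c * (n : ℝ) ^ k ≤ ((dpStarConfigs k w E).ncard : ℝ)) := by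
  refine ⟨⟨2, two_pos, fun n E hE => ?_⟩, ⟨(2 * k : ℝ)⁻¹ ^ k, by positivity, k, fun n hn => ?_⟩⟩
  · rw [← hE]
    exact_mod_cast ncard_dpStarConfigs_le hk hw E
  · obtain ⟨E, hE, hcount⟩ := exists_card_eq_le_ncard_dpStarConfigs (by omega) w hn
    exact ⟨E, hE, by rwa [← mul_pow, inv_mul_eq_div]⟩
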